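/- In the [4,2] self-dual Reed–Solomon QPIR example, for any Z_1, Z_2 ∈ F_4^m, any files x^i ∈ F_4^2 with codewords y^i = x^i G, and queries Q_1 = Z_1 + δ_K, Q_2 = Z_2, Q_3 = α²Z_1 + αZ_2, Q_4 = αZ_1 + α²Z_2 (where δ_K is the K-th standard basis vector of F_4^m added to server 1's query), the telescoping sum ∑_{s=1}^4 ⟨Q_s, y_{·,s}⟩ = x^K_1, where y_{·,s} = (y^1_s, …, y^m_s). -/

import Mathlib

open Matrix

/-!
Write `Q_{i,·}` for the query row `(Q₁ i, …, Q₄ i)`. It equals `(Z₁ i, Z₂ i) G` plus `δ_{iK}` in the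
first coordinate, so the total response is `∑ᵢ Q_{i,·} ⬝ (x^i G)`. The code spanned by `G` is
self-orthogonal (`G Gᵀ = 0` in characteristic 2 when `α² + α + 1 = 0`), so every `Z`-term vanishes
and only `δ_{KK} (x^K G)₀ = x^K_1` survives.
-/

namespace Matrix

variable {R : Type*} [CommSemiring R] {k n m : Type*} [Fintype k] [Fintype n] [Fintype m]

theorem vecMul_dotProduct_vecMul_of_mul_transpose_eq_zero {G : Matrix k n R} (hG : G * Gᵀ = 0)
    (u v : k → R) : (u ᵥ* G) ⬝ᵥ (v ᵥ* G) = 0 := by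
  rw [← dotProduct_mulVec, ← vecMul_transpose, vecMul_vecMul, hG, vecMul_zero,
    dotProduct_zero]

theorem sum_vecMul_add_single_dotProduct_vecMul [DecidableEq m] [DecidableEq n]
    {G : Matrix k n R} (hG : G * Gᵀ = 0) (Z x : m → k → R) (K : m) (s₀ : n) :
    ∑ i, (Z i ᵥ* G + Pi.single s₀ (if i = K then 1 else 0)) ⬝ᵥ (x i ᵥ* G) = (x K ᵥ* G) s₀ := by
  simp only [add_dotProduct, vecMul_dotProduct_vecMul_of_mul_transpose_eq_zero hG, zero_add,
    single_dotProduct, ite_mul, one_mul, zero_mul, Finset.sum_ite_eq', Finset.mem_univ, if_true]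

end Matrix

theorem rs42_mul_transpose_eq_zero {F : Type*} [Field F] [CharP F 2] {α : F}
    (hα : α ^ 2 + α + 1 = 0) :
    (!![1, 0, α ^ 2, α; 0, 1, α, α ^ 2] : Matrix (Fin 2) (Fin 4) F) *
      (!![1, 0, α ^ 2, α; 0, 1, α, α ^ 2] : Matrix (Fin 2) (Fin 4) F)ᵀ = 0 := by
  have h2 : (2 : F) = 0 := CharTwo.two_eq_zero
  ext i j
  -- diagonal entries are `1 + α² + α⁴ = (α² - α + 1)(α² + α + 1)`, off-diagonal ones `2α³`
  fin_cases i <;> fin_cases j <;>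
    simp [Matrix.mul_apply, Fin.sum_univ_four] <;>
    first
      | linear_combination (α ^ 2 - α + 1) * hα
      | linear_combination α ^ 3 * h2

/-- Telescoping sum in the `[4,2]` self-dual Reed–Solomon QPIR example:
the sum of the four servers' inner-product responses equals `x^K_1`. -/
theorem rs42_qpir_telescoping_sum
    {F : Type*} [Field F] [CharP F 2] {m : ℕ}
    (α : F) (hα : α ^ 2 + α + 1 = 0)
    (G : Matrix (Fin 2) (Fin 4) F)
    (hG : G = !![1, 0, α ^ 2, α; 0, 1, α, α ^ 2])
    (x : Fin m → Fin 2 → F) (y : Fin m → Fin 4 → F)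
    (hy : ∀ i, y i = Matrix.vecMul (x i) G)
    (Z₁ Z₂ : Fin m → F) (K : Fin m)
    (Q₁ Q₂ Q₃ Q₄ : Fin m → F)
    (hQ₁ : Q₁ = fun i => Z₁ i + if i = K then 1 else 0)
    (hQ₂ : Q₂ = Z₂)
    (hQ₃ : Q₃ = fun i => α ^ 2 * Z₁ i + α * Z₂ i)
    (hQ₄ : Q₄ = fun i => α * Z₁ i + α ^ 2 * Z₂ i) :
    (∑ i, Q₁ i * y i 0) + (∑ i, Q₂ i * y i 1)
      + (∑ i, Q₃ i * y i 2) + (∑ i, Q₄ i * y i 3) = x K 0 := by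
  have hGG : G * Gᵀ = 0 := hG ▸ rs42_mul_transpose_eq_zero hα
  have hQ : ∀ i, ![Q₁ i, Q₂ i, Q₃ i, Q₄ i] =
      ![Z₁ i, Z₂ i] ᵥ* G + Pi.single 0 (if i = K then 1 else 0) := by
    intro i
    subst hG hQ₁ hQ₂ hQ₃ hQ₄
    ext s
    fin_cases s <;> simp <;> ring
  calc _ = ∑ i, ![Q₁ i, Q₂ i, Q₃ i, Q₄ i] ⬝ᵥ y i := by
          simp only [dotProduct, Fin.sum_univ_four, Finset.sum_add_distrib]; rfl
    _ = ∑ i, (![Z₁ i, Z₂ i] ᵥ* G + Pi.single 0 (if i = K then 1 else 0)) ⬝ᵥ (x i ᵥ* G) := by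
          simp_rw [hQ, hy]
    _ = (x K ᵥ* G) 0 := sum_vecMul_add_single_dotProduct_vecMul hGG _ _ K 0
    _ = x K 0 := by simp [hG, vecHead]
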